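/- Let η : (0,2] → (0,1] and b > 0, and define η₁, η̃, γ and γ⁻¹ as follows: η₁(0) := 0, η₁(ε) := sup{η(ε') : 0 < ε' ≤ min{2, ε}}, η̃(ε) := (1/2)·∫₀^ε η₁(t) dt, γ(ε) := (b/2)·η̃(4ε/b), and γ⁻¹ is a two-sided inverse of γ on [0,∞). Define q̃(ε) := γ⁻¹(3ε) + ε and, for each integer n ≥ 1, qₙ(ε) := γ⁻¹(2ε + b/n) + ε. Then for every ε > 0 and every integer n ≥ b/ε one has qₙ^p(ε) ≤ q̃^p(ε) for all p ∈ ℕ. -/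
import Mathlib


/-- `η₁(ε) := sup {η(ε') : 0 < ε' ≤ min 2 ε}` for `ε > 0`, and `η₁(ε) := 0` otherwise. -/
noncomputable def eta1 (η : ℝ → ℝ) (ε : ℝ) : ℝ :=
  if 0 < ε then sSup {y : ℝ | ∃ ε' : ℝ, 0 < ε' ∧ ε' ≤ min 2 ε ∧ y = η ε'} else 0

/-- `η̃(ε) := (1/2)·∫₀^ε η₁(t) dt`. -/
noncomputable def etaTilde (η : ℝ → ℝ) (ε : ℝ) : ℝ :=
  (1 / 2) * ∫ t in (0 : ℝ)..ε, eta1 η t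

/-- `γ(ε) := (b/2)·η̃(4ε/b)`. -/
noncomputable def gammaFun (η : ℝ → ℝ) (b : ℝ) (ε : ℝ) : ℝ :=
  (b / 2) * etaTilde η (4 * ε / b)

lemma eta1_bddAbove (η : ℝ → ℝ)
    (hη_range : ∀ ε : ℝ, 0 < ε → ε ≤ 2 → 0 < η ε ∧ η ε ≤ 1) (ε : ℝ) :
    BddAbove {y : ℝ | ∃ ε' : ℝ, 0 < ε' ∧ ε' ≤ min 2 ε ∧ y = η ε'} := by
  refine ⟨1, ?_⟩
  rintro y ⟨ε', hε', hle, rfl⟩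
  exact (hη_range ε' hε' (hle.trans (min_le_left _ _))).2

lemma eta1_nonneg (η : ℝ → ℝ)
    (hη_range : ∀ ε : ℝ, 0 < ε → ε ≤ 2 → 0 < η ε ∧ η ε ≤ 1) (ε : ℝ) :
    0 ≤ eta1 η ε := by
  unfold eta1
  split_ifs with h
  · have hm : 0 < min 2 ε := lt_min two_pos h
    have hmem : η (min 2 ε) ∈ {y : ℝ | ∃ ε' : ℝ, 0 < ε' ∧ ε' ≤ min 2 ε ∧ y = η ε'} :=
      ⟨min 2 ε, hm, le_rfl, rfl⟩
    have := le_csSup (eta1_bddAbove η hη_range ε) hmem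
    exact le_trans (hη_range _ hm (min_le_left _ _)).1.le this
  · exact le_rfl

lemma eta1_mono (η : ℝ → ℝ)
    (hη_range : ∀ ε : ℝ, 0 < ε → ε ≤ 2 → 0 < η ε ∧ η ε ≤ 1) :
    Monotone (eta1 η) := by
  intro a c hac
  by_cases ha : 0 < a
  · have hc : 0 < c := lt_of_lt_of_le ha hac
    unfold eta1
    rw [if_pos ha, if_pos hc]
    refine csSup_le_csSup (eta1_bddAbove η hη_range c)
      ⟨η (min 2 a), min 2 a, lt_min two_pos ha, le_rfl, rfl⟩ ?_
    rintro y ⟨ε', hε', hle, rfl⟩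
    exact ⟨ε', hε', hle.trans (min_le_min le_rfl hac), rfl⟩
  · have : eta1 η a = 0 := by unfold eta1; rw [if_neg ha]
    rw [this]
    exact eta1_nonneg η hη_range c

lemma gammaFun_mono (η : ℝ → ℝ)
    (hη_range : ∀ ε : ℝ, 0 < ε → ε ≤ 2 → 0 < η ε ∧ η ε ≤ 1)
    (b : ℝ) (hb : 0 < b) {s t : ℝ} (hs : 0 ≤ s) (hst : s ≤ t) :
    gammaFun η b s ≤ gammaFun η b t := by
  unfold gammaFun etaTilde
  have h4 : 4 * s / b ≤ 4 * t / b := by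
    gcongr
  have h0 : (0:ℝ) ≤ 4 * s / b := by positivity
  have hint : (∫ u in (0:ℝ)..(4 * s / b), eta1 η u) ≤ ∫ u in (0:ℝ)..(4 * t / b), eta1 η u := by
    refine intervalIntegral.integral_mono_interval le_rfl h0 h4 ?_
      (eta1_mono η hη_range).intervalIntegrable
    exact Filter.Eventually.of_forall fun u => eta1_nonneg η hη_range u
  nlinarith [hint]

lemma gammaInv_mono (η : ℝ → ℝ)
    (hη_range : ∀ ε : ℝ, 0 < ε → ε ≤ 2 → 0 < η ε ∧ η ε ≤ 1)
    (b : ℝ) (hb : 0 < b)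
    (γinv : ℝ → ℝ) (hγinv_nonneg : ∀ s : ℝ, 0 ≤ s → 0 ≤ γinv s)
    (hγinv_right : ∀ s : ℝ, 0 ≤ s → gammaFun η b (γinv s) = s)
    {s t : ℝ} (hs : 0 ≤ s) (hst : s ≤ t) : γinv s ≤ γinv t := by
  by_contra h
  push_neg at h
  have ht : 0 ≤ t := hs.trans hst
  have := gammaFun_mono η hη_range b hb (hγinv_nonneg t ht) h.le
  rw [hγinv_right t ht, hγinv_right s hs] at this
  have : s = t := le_antisymm hst this
  exact absurd (by rw [this]) (ne_of_gt h)

/-- for `n ≥ b/ε` the iterates of `qₙ(ε) := γ⁻¹(2ε + b/n) + ε` are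
bounded by the iterates of `q̃(ε) := γ⁻¹(3ε) + ε`. -/
theorem qn_iterates_le_qtilde_iterates
    (η : ℝ → ℝ) (hη_range : ∀ ε : ℝ, 0 < ε → ε ≤ 2 → 0 < η ε ∧ η ε ≤ 1)
    (b : ℝ) (hb : 0 < b)
    (γinv : ℝ → ℝ) (hγinv_nonneg : ∀ s : ℝ, 0 ≤ s → 0 ≤ γinv s)
    (hγinv_right : ∀ s : ℝ, 0 ≤ s → gammaFun η b (γinv s) = s)
    (hγinv_left : ∀ s : ℝ, 0 ≤ s → γinv (gammaFun η b s) = s)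
    (qt : ℝ → ℝ) (hqt : ∀ ε : ℝ, qt ε = γinv (3 * ε) + ε)
    (qn : ℕ → ℝ → ℝ)
    (hqn : ∀ (n : ℕ), 1 ≤ n → ∀ ε : ℝ, qn n ε = γinv (2 * ε + b / (n : ℝ)) + ε) :
    ∀ ε : ℝ, 0 < ε → ∀ n : ℕ, 1 ≤ n → b / ε ≤ (n : ℝ) →
      ∀ p : ℕ, (qn n)^[p] ε ≤ qt^[p] ε := by
  intro ε hε n hn hbn p
  have hnpos : (0:ℝ) < n := by exact_mod_cast hn
  have hbne : b / (n : ℝ) ≤ ε := by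
    rw [div_le_iff₀ hnpos]
    rw [div_le_iff₀ hε] at hbn
    linarith [hbn]
  have key : ∀ p : ℕ, ε ≤ (qn n)^[p] ε ∧ (qn n)^[p] ε ≤ qt^[p] ε := by
    intro p
    induction p with
    | zero => exact ⟨le_rfl, le_rfl⟩
    | succ p ih =>
      obtain ⟨h1, h2⟩ := ih
      set x := (qn n)^[p] ε with hx
      set y := qt^[p] ε with hy
      rw [Function.iterate_succ_apply', Function.iterate_succ_apply', ← hx, ← hy]
      have hxpos : 0 < x := lt_of_lt_of_le hε h1
      have h2x : 0 ≤ 2 * x + b / (n : ℝ) := by positivity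
      have hmono : γinv (2 * x + b / (n : ℝ)) ≤ γinv (3 * y) := by
        refine gammaInv_mono η hη_range b hb γinv hγinv_nonneg hγinv_right h2x ?_
        have hbx : b / (n : ℝ) ≤ x := hbne.trans h1
        linarith
      have hnn : 0 ≤ γinv (2 * x + b / (n : ℝ)) := hγinv_nonneg _ h2x
      constructor
      · rw [hqn n hn x]; linarith
      · rw [hqn n hn x, hqt y]; linarith
  exact (key p).2
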